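/- arXiv:2103.15772 — 2 statements merged into one kernel-verified Lean document; each statement's English description precedes it below -/
import Mathlib

section
/- Let C be a k-linear category with finite-dimensional hom spaces equipped with a cyclic nondegenerate trace (t_P)_P. The degree-zero product is commutative after applying the trace: for all objects P, Q and all h ∈ Hom(P,P), h' ∈ Hom(Q,Q), and any choices of dual bases used in forming the products, one has t_P(h ⋆ h') = t_Q(h' ⋆ h). -/
/-!
Both sides are traces of linear endomorphisms computed in dual bases: the left side is the
trace of `v ↦ h ≫ v ≫ h'` on `Hom(P,Q)`, the right side that of `u ↦ h' ≫ u ≫ h` on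
`Hom(Q,P)`. By cyclicity these two maps are adjoint for the pairing `(v, u) ↦ t_P (v ≫ u)`,
and adjoint maps have equal traces, as one sees by computing both traces in a pair of dual
bases.
-/

open CategoryTheory

section DualBases

variable {R M N ι : Type*} [CommRing R] [AddCommGroup M] [Module R M] [AddCommGroup N]
  [Module R N] [DecidableEq ι] {B : M →ₗ[R] N →ₗ[R] R} {b : Module.Basis ι R M}
  {c : Module.Basis ι R N}

theorem Module.Basis.repr_apply_eq_of_dual (hbc : ∀ i j, B (b i) (c j) = if i = j then 1 else 0)
    (m : M) (i : ι) : b.repr m i = B m (c i) := by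
  have : b.coord i = B.flip (c i) := b.ext fun j => by simp [hbc, Finsupp.single_apply, eq_comm]
  exact LinearMap.congr_fun this m

variable [Fintype ι]

theorem LinearMap.trace_eq_sum_of_dual (hbc : ∀ i j, B (b i) (c j) = if i = j then 1 else 0)
    (T : M →ₗ[R] M) : trace R M T = ∑ i, B (T (b i)) (c i) := by
  simp only [trace_eq_matrix_trace R b, Matrix.trace, Matrix.diag, toMatrix_apply,
    b.repr_apply_eq_of_dual hbc]

theorem LinearMap.trace_eq_trace_of_adjoint_of_dual
    (hbc : ∀ i j, B (b i) (c j) = if i = j then 1 else 0)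
    {T : M →ₗ[R] M} {S : N →ₗ[R] N} (hTS : ∀ m n, B (T m) n = B m (S n)) :
    trace R M T = trace R N S := by
  have hcb : ∀ i j, B.flip (c i) (b j) = if i = j then 1 else 0 := fun i j => by
    simp [hbc, eq_comm]
  simp only [trace_eq_sum_of_dual hbc, trace_eq_sum_of_dual hcb, hTS, flip_apply]

end DualBases

namespace CategoryTheory.Linear

variable {k C : Type*} [CommRing k] [Category C] [Preadditive C] [Linear k C]

def tracePairing (t : ∀ P : C, (P ⟶ P) →ₗ[k] k) (P Q : C) :
    (P ⟶ Q) →ₗ[k] (Q ⟶ P) →ₗ[k] k :=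
  (comp P Q P).compr₂ (t P)

@[simp]
theorem tracePairing_apply (t : ∀ P : C, (P ⟶ P) →ₗ[k] k) {P Q : C} (v : P ⟶ Q)
    (u : Q ⟶ P) :
    tracePairing t P Q v u = t P (v ≫ u) :=
  rfl

variable (k) in
def sandwich {P Q : C} (h : P ⟶ P) (h' : Q ⟶ Q) : (P ⟶ Q) →ₗ[k] (P ⟶ Q) :=
  (leftComp k Q h).comp (rightComp k P h')

@[simp]
theorem sandwich_apply {P Q : C} (h : P ⟶ P) (h' : Q ⟶ Q) (v : P ⟶ Q) :
    sandwich k h h' v = h ≫ v ≫ h' :=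
  rfl

variable {t : ∀ P : C, (P ⟶ P) →ₗ[k] k}

theorem tracePairing_sandwich
    (cyc : ∀ {P Q : C} (f : P ⟶ Q) (g : Q ⟶ P), t P (f ≫ g) = t Q (g ≫ f)) {P Q : C}
    (h : P ⟶ P) (h' : Q ⟶ Q) (v : P ⟶ Q) (u : Q ⟶ P) :
    tracePairing t P Q (sandwich k h h' v) u = tracePairing t P Q v (sandwich k h' h u) := by
  simpa using cyc h (v ≫ h' ≫ u)

theorem trace_sandwich_eq_of_dual
    (cyc : ∀ {P Q : C} (f : P ⟶ Q) (g : Q ⟶ P), t P (f ≫ g) = t Q (g ≫ f)) {P Q : C}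
    {ι : Type*} [Fintype ι] [DecidableEq ι]
    {f : Module.Basis ι k (P ⟶ Q)} {g : Module.Basis ι k (Q ⟶ P)}
    (dual : ∀ i j, t P (f i ≫ g j) = if i = j then 1 else 0) (h : P ⟶ P) (h' : Q ⟶ Q) :
    LinearMap.trace k _ (sandwich k h h') = t P (∑ i, f i ≫ h' ≫ g i ≫ h) := by
  rw [LinearMap.trace_eq_sum_of_dual (B := tracePairing t P Q) dual, map_sum]
  refine Finset.sum_congr rfl fun i _ => ?_
  simpa using (cyc (f i ≫ h' ≫ g i) h).symm

end CategoryTheory.Linear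

/-- The degree-zero product is commutative after applying the trace:
`t_P (h ⋆ h') = t_Q (h' ⋆ h)` for any choices of dual bases used to form the two products
(`h ⋆ h' = ∑ i, h ∘ g i ∘ h' ∘ f i` with `f, g` dual bases of `Hom(P,Q)`, `Hom(Q,P)` relative to
`t_P`, and `h' ⋆ h = ∑ j, h' ∘ g' j ∘ h ∘ f' j` with `f', g'` dual bases of `Hom(Q,P)`,
`Hom(P,Q)` relative to `t_Q`; empty index types cover the case `Hom(P,Q) = 0`). -/
theorem trace_star_comm
    {k : Type*} [Field k] {C : Type*} [Category C] [Preadditive C] [CategoryTheory.Linear k C]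
    [∀ X Y : C, FiniteDimensional k (X ⟶ Y)]
    (t : ∀ P : C, (P ⟶ P) →ₗ[k] k)
    (cyc : ∀ {P Q : C} (f : P ⟶ Q) (g : Q ⟶ P), t P (f ≫ g) = t Q (g ≫ f))
    (nondeg₁ : ∀ {P Q : C} (f : P ⟶ Q), (∀ g : Q ⟶ P, t P (f ≫ g) = 0) → f = 0)
    (nondeg₂ : ∀ {P Q : C} (g : Q ⟶ P), (∀ f : P ⟶ Q, t P (f ≫ g) = 0) → g = 0)
    {P Q : C} {ι κ : Type*} [Fintype ι] [DecidableEq ι] [Fintype κ] [DecidableEq κ]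
    (f : Module.Basis ι k (P ⟶ Q)) (g : Module.Basis ι k (Q ⟶ P))
    (dual : ∀ i j, t P (f i ≫ g j) = if i = j then 1 else 0)
    (f' : Module.Basis κ k (Q ⟶ P)) (g' : Module.Basis κ k (P ⟶ Q))
    (dual' : ∀ i j, t Q (f' i ≫ g' j) = if i = j then 1 else 0)
    (h : P ⟶ P) (h' : Q ⟶ Q) :
    t P (∑ i, f i ≫ h' ≫ g i ≫ h) = t Q (∑ j, f' j ≫ h ≫ g' j ≫ h') := by
  rw [← Linear.trace_sandwich_eq_of_dual cyc dual, ← Linear.trace_sandwich_eq_of_dual cyc dual']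
  exact LinearMap.trace_eq_trace_of_adjoint_of_dual (B := Linear.tracePairing t P Q) dual
    (Linear.tracePairing_sandwich cyc h h')
end

section
/- Let C be a k-linear category with finite-dimensional hom spaces equipped with a cyclic nondegenerate trace (t_P)_P. For objects P, Q and any h ∈ Hom(P,P), both h∘ξ_{P,Q} and ξ_{P,Q}∘h are equal to the double sum Σ_{i,j} t_P(h∘g_i∘f_j) · (g_j∘f_i), where (f_i) and (g_i) are dual bases of Hom(P,Q) and Hom(Q,P). -/
open CategoryTheory

/-! The pairing `(a, b) ↦ t_P (a ≫ b)` makes `(f i)` and `(g i)` dual bases, so the coordinates of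
a morphism in one basis are its traces against the other. Expanding `g i ≫ h` in the basis `(g j)`
gives the formula for `ξ ≫ h`; expanding `h ≫ f i` in the basis `(f j)` and moving `h` around the
trace by cyclicity gives the same double sum for `h ≫ ξ`. -/

namespace CategoryTheory

variable {k : Type*} [Semiring k] {C : Type*} [Category C] [Preadditive C] [Linear k C]
  (t : ∀ P : C, (P ⟶ P) →ₗ[k] k) {P Q : C} {ι : Type*} [DecidableEq ι]

theorem trace_comp_eq_repr_right (f : ι → (P ⟶ Q)) (g : Module.Basis ι k (Q ⟶ P))
    (dual : ∀ i j, t P (f i ≫ g j) = if i = j then 1 else 0) (b : Q ⟶ P) (j : ι) :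
    t P (f j ≫ b) = g.repr b j := by
  have hcoord : t P ∘ₗ Linear.leftComp k P (f j) = g.coord j :=
    g.ext fun i => by simp [dual, Finsupp.single_apply, eq_comm]
  exact LinearMap.congr_fun hcoord b

theorem trace_comp_eq_repr_left (f : Module.Basis ι k (P ⟶ Q)) (g : ι → (Q ⟶ P))
    (dual : ∀ i j, t P (f i ≫ g j) = if i = j then 1 else 0) (a : P ⟶ Q) (j : ι) :
    t P (a ≫ g j) = f.repr a j := by
  have hcoord : t P ∘ₗ Linear.rightComp k P (g j) = f.coord j :=
    f.ext fun i => by simp [dual, Finsupp.single_apply]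
  exact LinearMap.congr_fun hcoord a

variable [Fintype ι]

theorem sum_trace_comp_smul_right (f : ι → (P ⟶ Q)) (g : Module.Basis ι k (Q ⟶ P))
    (dual : ∀ i j, t P (f i ≫ g j) = if i = j then 1 else 0) (b : Q ⟶ P) :
    ∑ j, t P (f j ≫ b) • g j = b := by
  simp only [trace_comp_eq_repr_right t f g dual]
  exact g.sum_repr b

theorem sum_trace_comp_smul_left (f : Module.Basis ι k (P ⟶ Q)) (g : ι → (Q ⟶ P))
    (dual : ∀ i j, t P (f i ≫ g j) = if i = j then 1 else 0) (a : P ⟶ Q) :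
    ∑ j, t P (a ≫ g j) • f j = a := by
  simp only [trace_comp_eq_repr_left t f g dual]
  exact f.sum_repr a

theorem sum_comp_comp_eq (f : ι → (P ⟶ Q)) (g : Module.Basis ι k (Q ⟶ P))
    (dual : ∀ i j, t P (f i ≫ g j) = if i = j then 1 else 0) (h : P ⟶ P) :
    (∑ i, f i ≫ g i) ≫ h = ∑ i, ∑ j, t P (f j ≫ g i ≫ h) • (f i ≫ g j) := by
  simp only [Preadditive.sum_comp, Category.assoc]
  refine Finset.sum_congr rfl fun i _ => ?_
  conv_lhs => rw [← sum_trace_comp_smul_right t f g dual (g i ≫ h)]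
  simp only [Preadditive.comp_sum, Linear.comp_smul]

theorem comp_sum_comp_eq (f : Module.Basis ι k (P ⟶ Q)) (g : ι → (Q ⟶ P))
    (dual : ∀ i j, t P (f i ≫ g j) = if i = j then 1 else 0) (h : P ⟶ P)
    (cyc : ∀ x : P ⟶ P, t P (h ≫ x) = t P (x ≫ h)) :
    h ≫ (∑ i, f i ≫ g i) = ∑ i, ∑ j, t P (f j ≫ g i ≫ h) • (f i ≫ g j) := by
  have hexpand : ∀ i, h ≫ f i ≫ g i = ∑ j, t P (f i ≫ g j ≫ h) • (f j ≫ g i) := fun i => by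
    conv_lhs => rw [← Category.assoc, ← sum_trace_comp_smul_left t f g dual (h ≫ f i)]
    simp only [Preadditive.sum_comp, Linear.smul_comp, Category.assoc, cyc]
  rw [Preadditive.comp_sum, Finset.sum_congr rfl fun i _ => hexpand i, Finset.sum_comm]

end CategoryTheory

/-- For dual bases `(f i)` of `Hom(P,Q)` and `(g i)` of `Hom(Q,P)` with respect
to a cyclic nondegenerate trace, and any `h : P ⟶ P`, both `h ∘ ξ_{P,Q}` and `ξ_{P,Q} ∘ h`
(where `ξ_{P,Q} = ∑ i, g i ∘ f i` is the handle element) are equal to the double sum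
`∑ i j, t_P (h ∘ g i ∘ f j) • (g j ∘ f i)`. -/
theorem handle_element_conjugation_formula
    {k : Type*} [Field k] {C : Type*} [Category C] [Preadditive C] [CategoryTheory.Linear k C]
    [∀ X Y : C, FiniteDimensional k (X ⟶ Y)]
    (t : ∀ P : C, (P ⟶ P) →ₗ[k] k)
    (cyc : ∀ {P Q : C} (f : P ⟶ Q) (g : Q ⟶ P), t P (f ≫ g) = t Q (g ≫ f))
    (nondeg₁ : ∀ {P Q : C} (f : P ⟶ Q), (∀ g : Q ⟶ P, t P (f ≫ g) = 0) → f = 0)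
    (nondeg₂ : ∀ {P Q : C} (g : Q ⟶ P), (∀ f : P ⟶ Q, t P (f ≫ g) = 0) → g = 0)
    {P Q : C} {ι : Type*} [Fintype ι] [DecidableEq ι]
    (f : Module.Basis ι k (P ⟶ Q)) (g : Module.Basis ι k (Q ⟶ P))
    (dual : ∀ i j, t P (f i ≫ g j) = if i = j then 1 else 0)
    (h : P ⟶ P) :
    (∑ i, f i ≫ g i) ≫ h = (∑ i, ∑ j, t P (f j ≫ g i ≫ h) • (f i ≫ g j)) ∧
    h ≫ (∑ i, f i ≫ g i) = (∑ i, ∑ j, t P (f j ≫ g i ≫ h) • (f i ≫ g j)) :=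
  ⟨sum_comp_comp_eq t f g dual h, comp_sum_comp_eq t f g dual h (cyc h)⟩
end
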